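/- arXiv:2507.15876 — 3 statements merged into one kernel-verified Lean document; each statement's English description precedes it below -/
import Mathlib

section
/- (Proposition 1, critical-point form.) Assume −1 < ρ < 1 and μ_ST + μ_LT ≠ 0. Define S(ω) = (ω·μ_ST + (1−ω)·μ_LT)/√(1 + 2(ρ−1)·ω·(1−ω)) and ω* = (μ_ST − ρ·μ_LT)/((μ_ST + μ_LT)·(1 − ρ)). Then S is differentiable at ω* and the derivative of S at ω* equals 0. -/
/-- Proposition 1, critical-point form: the absolute Sharpe ratio
`S(ω) = N(ω)/√V(ω)` is differentiable at the closed-form weight `ω*` and has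
zero derivative there. -/
theorem stmt_2 (μST μLT ρ : ℝ) (hρ₁ : -1 < ρ) (hρ₂ : ρ < 1)
    (hμ : μST + μLT ≠ 0) :
    DifferentiableAt ℝ
      (fun ω : ℝ => (ω * μST + (1 - ω) * μLT) /
        Real.sqrt (1 + 2 * (ρ - 1) * ω * (1 - ω)))
      ((μST - ρ * μLT) / ((μST + μLT) * (1 - ρ))) ∧
    deriv
      (fun ω : ℝ => (ω * μST + (1 - ω) * μLT) /
        Real.sqrt (1 + 2 * (ρ - 1) * ω * (1 - ω)))
      ((μST - ρ * μLT) / ((μST + μLT) * (1 - ρ))) = 0 := by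
  set a := μST with ha
  set b := μLT with hb
  set w : ℝ := (a - ρ * b) / ((a + b) * (1 - ρ)) with hw
  have hr : (1 : ℝ) - ρ ≠ 0 := by linarith
  have hK : 0 < a ^ 2 + b ^ 2 - 2 * ρ * (a * b) := by
    rcases eq_or_ne b 0 with hb0 | hb0
    · have ha0 : a ≠ 0 := by intro h0; apply hμ; rw [h0, hb0]; ring
      have : 0 < a ^ 2 := by positivity
      rw [hb0]; nlinarith
    · have hb2 : 0 < b ^ 2 := by positivity
      have hr2 : 0 < 1 - ρ ^ 2 := by nlinarith
      have h1 : 0 < (1 - ρ ^ 2) * b ^ 2 := mul_pos hr2 hb2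
      nlinarith [sq_nonneg (a - ρ * b)]
  have hs2 : 0 < (a + b) ^ 2 := by positivity
  -- value of V at w
  have hVval : 1 + 2 * (ρ - 1) * w * (1 - w)
      = (1 + ρ) * (a ^ 2 + b ^ 2 - 2 * ρ * (a * b)) / ((a + b) ^ 2 * (1 - ρ)) := by
    rw [hw]; field_simp; ring
  have hVpos : 0 < 1 + 2 * (ρ - 1) * w * (1 - w) := by
    rw [hVval]
    have h1 : (0:ℝ) < 1 + ρ := by linarith
    have h2 : (0:ℝ) < 1 - ρ := by linarith
    positivity
  have hVne : 1 + 2 * (ρ - 1) * w * (1 - w) ≠ 0 := ne_of_gt hVpos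
  have hsq : Real.sqrt (1 + 2 * (ρ - 1) * w * (1 - w)) ^ 2
      = 1 + 2 * (ρ - 1) * w * (1 - w) := Real.sq_sqrt hVpos.le
  have hsqpos : 0 < Real.sqrt (1 + 2 * (ρ - 1) * w * (1 - w)) :=
    Real.sqrt_pos.mpr hVpos
  have hsqne := ne_of_gt hsqpos
  -- derivative of N
  have hN : HasDerivAt (fun ω : ℝ => ω * a + (1 - ω) * b)
      (1 * a + (0 - 1) * b) w :=
    ((hasDerivAt_id w).mul_const a).add
      (((hasDerivAt_const w (1:ℝ)).sub (hasDerivAt_id w)).mul_const b)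
  -- derivative of V
  have hV : HasDerivAt (fun ω : ℝ => 1 + 2 * (ρ - 1) * ω * (1 - ω))
      (2 * (ρ - 1) * (1 - 2 * w)) w := by
    have h : HasDerivAt (fun ω : ℝ => 1 + 2 * (ρ - 1) * ω * (1 - ω)) _ w := (hasDerivAt_const w (1:ℝ)).add
      (((hasDerivAt_id w).const_mul (2 * (ρ - 1))).mul
        ((hasDerivAt_const w (1:ℝ)).sub (hasDerivAt_id w)))
    simp only [id_eq, Pi.sub_apply] at h
    convert h using 1
    ring
  have hG : HasDerivAt (fun ω : ℝ => Real.sqrt (1 + 2 * (ρ - 1) * ω * (1 - ω)))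
      ((2 * (ρ - 1) * (1 - 2 * w)) /
        (2 * Real.sqrt (1 + 2 * (ρ - 1) * w * (1 - w)))) w := hV.sqrt hVne
  have hS : HasDerivAt (fun ω : ℝ => (ω * a + (1 - ω) * b) /
      Real.sqrt (1 + 2 * (ρ - 1) * ω * (1 - ω))) _ w := hN.div hG hsqne
  constructor
  · exact hS.differentiableAt
  · rw [hS.deriv, div_eq_zero_iff]
    left
    have key : 2 * (1 * a + (0 - 1) * b) * (1 + 2 * (ρ - 1) * w * (1 - w))
        = (w * a + (1 - w) * b) * (2 * (ρ - 1) * (1 - 2 * w)) := by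
      rw [hw]; field_simp; ring
    have hmm := Real.mul_self_sqrt hVpos.le
    clear_value w
    rw [sub_eq_zero, mul_div_assoc', eq_div_iff (mul_ne_zero two_ne_zero hsqne)]
    linear_combination key + (2 * a - 2 * b) * hmm
end

section
/- (Proposition 1, global maximality.) Assume −1 < ρ < 1 and μ_ST + μ_LT > 0, and let S(ω) = (ω·μ_ST + (1−ω)·μ_LT)/√(1 + 2(ρ−1)·ω·(1−ω)) and ω* = (μ_ST − ρ·μ_LT)/((μ_ST + μ_LT)·(1 − ρ)). Then for every ω ∈ ℝ, S(ω) ≤ S(ω*); i.e., ω* maximizes the absolute Sharpe ratio over all unit-budget weights. -/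
/-- Proposition 1, global maximality: the closed-form weight `ω*` maximizes the
absolute Sharpe ratio `S(ω) = N(ω)/√V(ω)` over all unit-budget weights. -/
theorem stmt_5 (μST μLT ρ : ℝ) (hρ₁ : -1 < ρ) (hρ₂ : ρ < 1)
    (hμ : 0 < μST + μLT) :
    ∀ ω : ℝ,
      (ω * μST + (1 - ω) * μLT) /
          Real.sqrt (1 + 2 * (ρ - 1) * ω * (1 - ω)) ≤
        (((μST - ρ * μLT) / ((μST + μLT) * (1 - ρ))) * μST +
            (1 - (μST - ρ * μLT) / ((μST + μLT) * (1 - ρ))) * μLT) /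
          Real.sqrt (1 + 2 * (ρ - 1) *
            ((μST - ρ * μLT) / ((μST + μLT) * (1 - ρ))) *
            (1 - (μST - ρ * μLT) / ((μST + μLT) * (1 - ρ)))) := by
  intro ω
  set a := μST with ha
  set b := μLT with hb
  have hs : (0:ℝ) < a + b := hμ
  have h1ρ : (0:ℝ) < 1 - ρ := by linarith
  have h1ρ' : (0:ℝ) < 1 + ρ := by linarith
  set q : ℝ := a^2 - 2*ρ*a*b + b^2 with hq
  have hqpos : 0 < q := by
    nlinarith [sq_nonneg (a - ρ*b), sq_nonneg b, mul_pos hs hs, sq_nonneg (a-b)]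
  set ωs : ℝ := (a - ρ * b) / ((a + b) * (1 - ρ)) with hωs
  have hden : (a + b) * (1 - ρ) ≠ 0 := by positivity
  have hNs : ωs * a + (1 - ωs) * b = q / ((a + b) * (1 - ρ)) := by
    rw [hωs, hq]; field_simp [hs.ne', h1ρ.ne']; ring
  have hVs : 1 + 2 * (ρ - 1) * ωs * (1 - ωs) = (1 + ρ) * q / ((a + b)^2 * (1 - ρ)) := by
    rw [hωs, hq]; field_simp [hs.ne', h1ρ.ne']; ring
  have hNspos : 0 < ωs * a + (1 - ωs) * b := by rw [hNs]; positivity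
  have hVspos : 0 < 1 + 2 * (ρ - 1) * ωs * (1 - ωs) := by rw [hVs]; positivity
  have h1ρ2 : (0:ℝ) < 1 - ρ^2 := by nlinarith
  set M : ℝ := Real.sqrt (q / (1 - ρ^2)) with hM
  have hM2 : M^2 = q / (1 - ρ^2) := Real.sq_sqrt (by positivity)
  have hMpos : 0 < M := Real.sqrt_pos.mpr (by positivity)
  have hsv : 0 < Real.sqrt (1 + 2 * (ρ - 1) * ωs * (1 - ωs)) := Real.sqrt_pos.mpr hVspos
  have hRHS : (ωs * a + (1 - ωs) * b) / Real.sqrt (1 + 2 * (ρ - 1) * ωs * (1 - ωs)) = M := by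
    rw [div_eq_iff (ne_of_gt hsv)]
    have h1 : (ωs * a + (1 - ωs) * b)^2
        = (M * Real.sqrt (1 + 2 * (ρ - 1) * ωs * (1 - ωs)))^2 := by
      rw [mul_pow, hM2, Real.sq_sqrt (le_of_lt hVspos), hNs, hVs]
      field_simp
      ring
    calc ωs * a + (1 - ωs) * b
        = Real.sqrt ((ωs * a + (1 - ωs) * b)^2) := (Real.sqrt_sq hNspos.le).symm
      _ = Real.sqrt ((M * Real.sqrt (1 + 2 * (ρ - 1) * ωs * (1 - ωs)))^2) := by rw [h1]
      _ = M * Real.sqrt (1 + 2 * (ρ - 1) * ωs * (1 - ωs)) :=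
          Real.sqrt_sq (by positivity)
  rw [hRHS]
  have hV : 0 < 1 + 2 * (ρ - 1) * ω * (1 - ω) := by nlinarith [sq_nonneg (2*ω - 1)]
  have hsV : 0 < Real.sqrt (1 + 2 * (ρ - 1) * ω * (1 - ω)) := Real.sqrt_pos.mpr hV
  rw [div_le_iff₀ hsV]
  rcases le_or_gt (ω * a + (1 - ω) * b) 0 with hN | hN
  · exact hN.trans (by positivity)
  · have key : (ω * a + (1 - ω) * b)^2 ≤ M^2 * (1 + 2 * (ρ - 1) * ω * (1 - ω)) := by
      rw [hM2, div_mul_eq_mul_div, le_div_iff₀ h1ρ2]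
      nlinarith [sq_nonneg ((a - ρ*b) - ω * (1 - ρ) * (a + b))]
    calc ω * a + (1 - ω) * b
        = Real.sqrt ((ω * a + (1 - ω) * b)^2) := (Real.sqrt_sq hN.le).symm
      _ ≤ Real.sqrt (M^2 * (1 + 2 * (ρ - 1) * ω * (1 - ω))) := Real.sqrt_le_sqrt key
      _ = M * Real.sqrt (1 + 2 * (ρ - 1) * ω * (1 - ω)) := by
          rw [Real.sqrt_mul (by positivity), Real.sqrt_sq hMpos.le]
end

section
/- (Value of the optimal Sharpe ratio.) Assume −1 < ρ < 1 and μ_ST + μ_LT > 0, and let S(ω) = (ω·μ_ST + (1−ω)·μ_LT)/√(1 + 2(ρ−1)·ω·(1−ω)) and ω* = (μ_ST − ρ·μ_LT)/((μ_ST + μ_LT)·(1 − ρ)). Then S(ω*) = √((μ_ST² − 2ρ·μ_ST·μ_LT + μ_LT²)/(1 − ρ²)). -/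
/-- Value of the optimal Sharpe ratio:
`S(ω*) = √((μST² − 2ρ·μST·μLT + μLT²)/(1 − ρ²))`. -/
theorem stmt_6 (μST μLT ρ : ℝ) (hρ₁ : -1 < ρ) (hρ₂ : ρ < 1)
    (hμ : 0 < μST + μLT) :
    (((μST - ρ * μLT) / ((μST + μLT) * (1 - ρ))) * μST +
        (1 - (μST - ρ * μLT) / ((μST + μLT) * (1 - ρ))) * μLT) /
      Real.sqrt (1 + 2 * (ρ - 1) *
        ((μST - ρ * μLT) / ((μST + μLT) * (1 - ρ))) *
        (1 - (μST - ρ * μLT) / ((μST + μLT) * (1 - ρ)))) =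
      Real.sqrt ((μST ^ 2 - 2 * ρ * μST * μLT + μLT ^ 2) / (1 - ρ ^ 2)) := by
  set Q : ℝ := μST ^ 2 - 2 * ρ * μST * μLT + μLT ^ 2 with hQdef
  set D : ℝ := (μST + μLT) * (1 - ρ) with hDdef
  have hρ1 : (0:ℝ) < 1 - ρ := by linarith
  have hρ2 : (0:ℝ) < 1 + ρ := by linarith
  have hρsq : (0:ℝ) < 1 - ρ ^ 2 := by nlinarith
  have hD : 0 < D := mul_pos hμ hρ1
  have hQ : 0 < Q := by
    have := mul_pos hμ hμ
    nlinarith [sq_nonneg (μST - μLT)]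
  have hNum : ((μST - ρ * μLT) / D) * μST + (1 - (μST - ρ * μLT) / D) * μLT
      = Q / D := by
    field_simp
    ring
  have hVar : 1 + 2 * (ρ - 1) * ((μST - ρ * μLT) / D) *
      (1 - (μST - ρ * μLT) / D) = (1 - ρ ^ 2) * Q / D ^ 2 := by
    field_simp
    ring
  rw [hNum, hVar]
  have h1 : Real.sqrt ((1 - ρ ^ 2) * Q / D ^ 2)
      = Real.sqrt ((1 - ρ ^ 2) * Q) / D := by
    rw [div_eq_mul_inv, Real.sqrt_mul (by positivity), Real.sqrt_inv,
      Real.sqrt_sq hD.le, div_eq_mul_inv]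
  have hs : 0 < Real.sqrt ((1 - ρ ^ 2) * Q) := Real.sqrt_pos.mpr (by positivity)
  rw [h1]
  have h2 : Q / D / (Real.sqrt ((1 - ρ ^ 2) * Q) / D)
      = Q / Real.sqrt ((1 - ρ ^ 2) * Q) := by
    field_simp
  rw [h2, div_eq_iff hs.ne', ← Real.sqrt_mul (by positivity),
    show Q / (1 - ρ ^ 2) * ((1 - ρ ^ 2) * Q) = Q ^ 2 by field_simp,
    Real.sqrt_sq hQ.le]
end
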